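/- There is no positive integer N satisfying σ_∞(σ_∞(N)) = 2N with σ_∞(N) = 2^f q, where q is an odd prime and f > 1. -/

import Mathlib

/-- The sum of infinitary divisors of `n`: for `n = ∏ p ^ e_p`, it equals
`∏_p ∏_{j : bit j of e_p is 1} (p ^ 2 ^ j + 1)`. -/
def infsigma (n : ℕ) : ℕ :=
  n.factorization.prod fun p e =>
    ∏ j ∈ Finset.range e, if e.testBit j then p ^ 2 ^ j + 1 else 1

/-!
Put `A = σ∞(2^f)`, a product of distinct Fermat numbers, and let `F = F_{j₀}` be the one belonging
to the top bit of `f`. Since `σ∞(2^f q) = A (q + 1) = 2N` and `F` is odd, `F ∣ N`. Every prime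
factor `r` of `F` is `1 mod 4`, so each factor `r^(2^j) + 1` of `σ∞(N) = 2^f q` is `2 mod 4`,
hence equal to `2q`. As `q² ∤ σ∞(N)`, only one such factor can occur: `F` is a power of a single
prime `r`, and `v_r(N) = 2^j`. Comparing `r`-adic valuations in `A (q + 1) = 2N` (Fermat numbers are
pairwise coprime, and `r ∤ q + 1`) gives `F = r^(2^j) = 2q - 1`; then `3 ∣ q`, so `q = 3` and
`N = 2A` with `A` odd. But now the prime `2 ∥ N` also contributes the factor `2 + 1 = q`, so
`q² ∣ σ∞(N)`.
-/

open Nat Finset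

theorem infsigma_prime_pow {p : ℕ} (hp : p.Prime) (e : ℕ) :
    infsigma (p ^ e) = ∏ j ∈ range e, if e.testBit j then p ^ 2 ^ j + 1 else 1 := by
  rw [infsigma, hp.factorization_pow, Finsupp.prod_single_index (by simp)]

theorem infsigma_prime {p : ℕ} (hp : p.Prime) : infsigma p = p + 1 := by
  simpa using infsigma_prime_pow hp 1

theorem infsigma_eq_prod_primeFactors (n : ℕ) :
    infsigma n = ∏ p ∈ n.primeFactors, infsigma (p ^ n.factorization p) := by
  rw [infsigma, Finsupp.prod, support_factorization]
  exact prod_congr rfl fun p hp => (infsigma_prime_pow (prime_of_mem_primeFactors hp) _).symm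

theorem infsigma_mul {a b : ℕ} (hab : a.Coprime b) :
    infsigma (a * b) = infsigma a * infsigma b := by
  rw [infsigma, factorization_mul_of_coprime hab]
  exact Finsupp.prod_add_index_of_disjoint (by simpa using hab.disjoint_primeFactors) _

theorem pow_two_pow_add_one_dvd_infsigma_prime_pow {p e j : ℕ} (hp : p.Prime)
    (h : e.testBit j) : p ^ 2 ^ j + 1 ∣ infsigma (p ^ e) := by
  rw [infsigma_prime_pow hp]
  simpa [h] using dvd_prod_of_mem (fun i => if e.testBit i then p ^ 2 ^ i + 1 else 1)
    (mem_range.2 (j.lt_two_pow_self.trans_le (ge_two_pow_of_testBit h)))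

theorem infsigma_prime_pow_factorization_dvd (n p : ℕ) :
    infsigma (p ^ n.factorization p) ∣ infsigma n := by
  by_cases hp : p ∈ n.primeFactors
  · rw [infsigma_eq_prod_primeFactors n]
    exact dvd_prod_of_mem _ hp
  · rw [Finsupp.notMem_support_iff.1 (by rwa [support_factorization]), pow_zero]
    simp [infsigma]

theorem eq_of_dvd_infsigma_prime_pow {n q p₁ p₂ : ℕ} (hq : ¬ q ^ 2 ∣ infsigma n)
    (hp₁ : p₁ ∈ n.primeFactors) (hp₂ : p₂ ∈ n.primeFactors)
    (h₁ : q ∣ infsigma (p₁ ^ n.factorization p₁)) (h₂ : q ∣ infsigma (p₂ ^ n.factorization p₂)) :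
    p₁ = p₂ := by
  by_contra hne
  apply hq
  have hsub := prod_dvd_prod_of_subset {p₁, p₂} n.primeFactors
    (fun p => infsigma (p ^ n.factorization p)) (by simp [insert_subset_iff, hp₁, hp₂])
  rw [prod_pair hne] at hsub
  rw [infsigma_eq_prod_primeFactors, sq]
  exact (mul_dvd_mul h₁ h₂).trans hsub

theorem odd_infsigma_two_pow (f : ℕ) : Odd (infsigma (2 ^ f)) := by
  rw [infsigma_prime_pow prime_two]
  refine prod_induction _ Odd (fun _ _ => Odd.mul) odd_one fun j _ => ?_
  split
  exacts [odd_fermatNumber j, odd_one]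

theorem factorization_infsigma_two_pow_of_dvd_fermatNumber {f j r : ℕ} (hj : f.testBit j)
    (hr : r.Prime) (hrF : r ∣ fermatNumber j) :
    (infsigma (2 ^ f)).factorization r = (fermatNumber j).factorization r := by
  have hjf : j ∈ range f := mem_range.2 (j.lt_two_pow_self.trans_le (ge_two_pow_of_testBit hj))
  rw [infsigma_prime_pow prime_two, prod_eq_mul_prod_sdiff_singleton j _ (absurd hjf), if_pos hj]
  have hcop : Coprime (2 ^ 2 ^ j + 1)
      (∏ i ∈ range f \ {j}, if f.testBit i then 2 ^ 2 ^ i + 1 else 1) :=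
    Coprime.prod_right fun i hi => by
      split
      · exact coprime_fermatNumber_fermatNumber (by simp at hi; omega)
      · exact coprime_one_right _
  have hr_not_dvd := fun h => hr.one_lt.ne' ((Coprime.coprime_dvd_left hrF hcop).eq_one_of_dvd h)
  rw [factorization_mul_of_coprime hcop, Finsupp.add_apply,
    factorization_eq_zero_of_not_dvd hr_not_dvd, add_zero, fermatNumber]

theorem Nat.eq_two_pow_of_testBit {n j : ℕ} (hj : n.testBit j)
    (huniq : ∀ i, n.testBit i → i = j) : n = 2 ^ j := by
  refine eq_of_testBit_eq fun i => ?_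
  rw [testBit_two_pow]
  by_cases hi : n.testBit i
  · simp [huniq i hi, hj]
  · grind

theorem Nat.factorization_two_two_mul_of_odd {a : ℕ} (ha : Odd a) :
    (2 * a).factorization 2 = 1 := by
  rw [Nat.factorization_mul two_ne_zero ha.pos.ne', Finsupp.add_apply, prime_two.factorization_self,
    factorization_eq_zero_of_not_dvd ha.not_two_dvd_nat]

theorem Nat.mod_four_eq_one_of_prime_dvd_fermatNumber {n r : ℕ} (hn : n ≠ 0) (hr : r.Prime)
    (hrF : r ∣ fermatNumber n) : r % 4 = 1 := by
  have hr2 : r ≠ 2 := fun h => (odd_fermatNumber n).not_two_dvd_nat (h ▸ hrF)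
  obtain ⟨k, rfl⟩ := pow_pow_add_primeFactors_one_lt hr hr2 hrF
  obtain ⟨m, rfl⟩ : ∃ m, n = m + 1 := ⟨n - 1, by omega⟩
  rw [show k * 2 ^ (m + 1 + 1) + 1 = 4 * (k * 2 ^ m) + 1 by ring]
  omega

theorem not_sq_dvd_two_pow_mul {q : ℕ} (hq : q.Prime) (hqodd : Odd q) (f : ℕ) :
    ¬ q ^ 2 ∣ 2 ^ f * q := by
  rw [sq, Nat.mul_dvd_mul_iff_right hq.pos]
  intro h
  rw [(prime_dvd_prime_iff_eq hq prime_two).1 (hq.dvd_of_dvd_pow h)] at hqodd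
  exact absurd hqodd (by decide)

theorem eq_two_mul_of_dvd_two_pow_mul {x f q : ℕ} (hq : q.Prime) (hqodd : Odd q)
    (hx : x ∣ 2 ^ f * q) (hx4 : x % 4 = 2) (hx2 : x ≠ 2) : x = 2 * q := by
  obtain ⟨a, b, ha, hb, rfl⟩ := Nat.dvd_mul.1 hx
  obtain ⟨u, -, rfl⟩ := (dvd_prime_pow prime_two).1 ha
  rcases u with _ | _ | u
  · rcases (dvd_prime hq).1 hb with rfl | rfl
    · simp at hx4
    · obtain ⟨k, rfl⟩ := hqodd
      omega
  · rcases (dvd_prime hq).1 hb with rfl | rfl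
    · simp at hx2
    · rfl
  · rw [show 2 ^ (u + 1 + 1) * b = 4 * (2 ^ u * b) by ring] at hx4
    omega

theorem not_dvd_add_one_of_pow_add_one_eq_two_mul {r m q : ℕ} (hr : 1 < r) (hr4 : r % 4 = 1)
    (hm : m ≠ 0) (h : r ^ m + 1 = 2 * q) : ¬ r ∣ q + 1 := by
  intro hrq
  have h3 : r ∣ 3 := by
    refine (Nat.dvd_add_right (dvd_pow_self r hm)).1 ?_
    rw [show r ^ m + 3 = 2 * (q + 1) by omega]
    exact hrq.mul_left 2
  have := Nat.le_of_dvd three_pos h3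
  omega

theorem eq_three_of_fermatNumber_add_one_eq_two_mul {n q : ℕ} (hn : n ≠ 0) (hq : q.Prime)
    (h : fermatNumber n + 1 = 2 * q) : q = 3 := by
  obtain ⟨m, rfl⟩ : ∃ m, n = m + 1 := ⟨n - 1, by omega⟩
  have h3 : 3 ∣ 2 * q := by
    rw [← h, fermatNumber, pow_succ', pow_mul]
    norm_num [Nat.dvd_iff_mod_eq_zero, Nat.add_mod, Nat.pow_mod]
  rcases (prime_three.dvd_mul).1 h3 with h | h
  · norm_num at h
  · exact (((dvd_prime hq).1 h).resolve_left (by norm_num)).symm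

theorem pow_two_pow_add_one_eq_two_mul_of_infsigma_eq {N f q r j : ℕ} (hq : q.Prime)
    (hqodd : Odd q) (hN : infsigma N = 2 ^ f * q) (hr : r.Prime) (hr4 : r % 4 = 1)
    (hj : (N.factorization r).testBit j) : r ^ 2 ^ j + 1 = 2 * q := by
  refine eq_two_mul_of_dvd_two_pow_mul (f := f) hq hqodd ?_ ?_ ?_
  · rw [← hN]
    exact (pow_two_pow_add_one_dvd_infsigma_prime_pow hr hj).trans
      (infsigma_prime_pow_factorization_dvd N r)
  · rw [Nat.add_mod, Nat.pow_mod, hr4, one_pow]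
    rfl
  · have := Nat.one_lt_pow (pow_ne_zero j two_ne_zero) hr.one_lt
    omega

theorem factorization_eq_two_pow_of_infsigma_eq {N f q r j : ℕ} (hq : q.Prime)
    (hqodd : Odd q) (hN : infsigma N = 2 ^ f * q) (hr : r.Prime) (hr4 : r % 4 = 1)
    (hj : (N.factorization r).testBit j) : N.factorization r = 2 ^ j := by
  refine eq_two_pow_of_testBit hj fun i hi => Nat.pow_right_injective le_rfl <|
    Nat.pow_right_injective hr.two_le ?_
  simpa using (pow_two_pow_add_one_eq_two_mul_of_infsigma_eq hq hqodd hN hr hr4 hi).trans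
    (pow_two_pow_add_one_eq_two_mul_of_infsigma_eq hq hqodd hN hr hr4 hj).symm

theorem dvd_infsigma_prime_pow_of_infsigma_eq {N f q r : ℕ} (hN0 : N ≠ 0) (hq : q.Prime)
    (hqodd : Odd q) (hN : infsigma N = 2 ^ f * q) (hr : r.Prime) (hr4 : r % 4 = 1)
    (hrN : r ∣ N) : q ∣ infsigma (r ^ N.factorization r) := by
  obtain ⟨j, hj⟩ := exists_testBit_of_ne_zero (hr.factorization_pos_of_dvd hN0 hrN).ne'
  have h2q := pow_two_pow_add_one_eq_two_mul_of_infsigma_eq hq hqodd hN hr hr4 hj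
  exact (Dvd.intro_left 2 h2q.symm).trans (pow_two_pow_add_one_dvd_infsigma_prime_pow hr hj)

theorem eq_of_prime_dvd_of_infsigma_eq {N f q r₁ r₂ : ℕ} (hN0 : N ≠ 0) (hq : q.Prime)
    (hqodd : Odd q) (hN : infsigma N = 2 ^ f * q) (hr₁ : r₁.Prime) (hr₂ : r₂.Prime)
    (h4₁ : r₁ % 4 = 1) (h4₂ : r₂ % 4 = 1) (hdvd₁ : r₁ ∣ N) (hdvd₂ : r₂ ∣ N) : r₁ = r₂ :=
  eq_of_dvd_infsigma_prime_pow (hN ▸ not_sq_dvd_two_pow_mul hq hqodd f)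
    (mem_primeFactors.2 ⟨hr₁, hdvd₁, hN0⟩) (mem_primeFactors.2 ⟨hr₂, hdvd₂, hN0⟩)
    (dvd_infsigma_prime_pow_of_infsigma_eq hN0 hq hqodd hN hr₁ h4₁ hdvd₁)
    (dvd_infsigma_prime_pow_of_infsigma_eq hN0 hq hqodd hN hr₂ h4₂ hdvd₂)

theorem fermatNumber_eq_prime_pow_of_infsigma_eq {N f q j₀ r : ℕ} (hN0 : N ≠ 0) (hq : q.Prime)
    (hqodd : Odd q) (hN : infsigma N = 2 ^ f * q) (hA : infsigma (2 ^ f) * (q + 1) = 2 * N)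
    (hj₀ : j₀ ≠ 0) (hbit : f.testBit j₀) (hFN : fermatNumber j₀ ∣ N) (hr : r.Prime)
    (hrF : r ∣ fermatNumber j₀) : fermatNumber j₀ = r ^ N.factorization r := by
  have h4 {d : ℕ} (hd : d.Prime) (hdF : d ∣ fermatNumber j₀) : d % 4 = 1 :=
    mod_four_eq_one_of_prime_dvd_fermatNumber hj₀ hd hdF
  obtain ⟨k, hk⟩ : ∃ k, fermatNumber j₀ = r ^ k :=
    ⟨_, eq_prime_pow_of_unique_prime_dvd (odd_fermatNumber j₀).pos.ne' fun hd hdF =>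
      eq_of_prime_dvd_of_infsigma_eq hN0 hq hqodd hN hd hr (h4 hd hdF) (h4 hr hrF)
        (hdF.trans hFN) (hrF.trans hFN)⟩
  obtain ⟨j, hj⟩ := exists_testBit_of_ne_zero (hr.factorization_pos_of_dvd hN0 (hrF.trans hFN)).ne'
  have hr4 := h4 hr hrF
  have hr2 : ¬ r ∣ 2 := fun h => by
    have := (prime_dvd_prime_iff_eq hr prime_two).1 h
    omega
  have hrq : ¬ r ∣ q + 1 := not_dvd_add_one_of_pow_add_one_eq_two_mul hr.one_lt hr4
    (pow_ne_zero j two_ne_zero)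
    (pow_two_pow_add_one_eq_two_mul_of_infsigma_eq hq hqodd hN hr hr4 hj)
  -- compare `r`-adic valuations in `σ∞(2^f) (q + 1) = 2N`
  have hv := congrArg (fun n => n.factorization r) hA
  simp only [Nat.factorization_mul (odd_infsigma_two_pow f).pos.ne' (succ_ne_zero q),
    Nat.factorization_mul two_ne_zero hN0, Finsupp.add_apply, factorization_eq_zero_of_not_dvd hrq,
    factorization_eq_zero_of_not_dvd hr2,
    factorization_infsigma_two_pow_of_dvd_fermatNumber hbit hr hrF, hk, hr.factorization_pow,
    Finsupp.single_eq_same] at hv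
  rw [hk, show k = N.factorization r by simpa using hv]

theorem factorization_two_ne_one_of_infsigma_eq_two_pow_mul_three {N f r : ℕ} (hN0 : N ≠ 0)
    (hN : infsigma N = 2 ^ f * 3) (hr : r.Prime) (hr4 : r % 4 = 1) (hrN : r ∣ N) :
    N.factorization 2 ≠ 1 := by
  intro h2
  have h2r : 2 = r := eq_of_dvd_infsigma_prime_pow
    (hN ▸ not_sq_dvd_two_pow_mul prime_three (by decide) f)
    (mem_primeFactors.2 ⟨prime_two, dvd_of_factorization_pos (by omega), hN0⟩)
    (mem_primeFactors.2 ⟨hr, hrN, hN0⟩)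
    (by rw [h2, pow_one, infsigma_prime prime_two])
    (dvd_infsigma_prime_pow_of_infsigma_eq hN0 prime_three (by decide) hN hr hr4 hrN)
  omega

theorem no_superperfect_infsigma_eq_two_pow_mul_prime :
    ¬ ∃ (N q f : ℕ), 0 < N ∧ q.Prime ∧ Odd q ∧ 1 < f ∧
      infsigma N = 2 ^ f * q ∧ infsigma (infsigma N) = 2 * N := by
  rintro ⟨N, q, f, hN, hq, hqodd, hf, hσN, hσσN⟩
  have hN0 : N ≠ 0 := hN.ne'
  set j₀ := f.log2
  have hj₀ : j₀ ≠ 0 := by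
    rw [Ne, ← Nat.lt_one_iff, log2_lt (by omega)]
    omega
  have hbit : f.testBit j₀ := testBit_log2 (by omega)
  have hA : infsigma (2 ^ f) * (q + 1) = 2 * N := by
    rw [← hσσN, hσN, infsigma_mul ((coprime_two_left.2 hqodd).pow_left f), infsigma_prime hq]
  have hFN : fermatNumber j₀ ∣ N :=
    (odd_fermatNumber j₀).coprime_two_right.dvd_of_dvd_mul_left
      (hA ▸ (pow_two_pow_add_one_dvd_infsigma_prime_pow prime_two hbit).mul_right _)
  set r := (fermatNumber j₀).minFac
  have hr : r.Prime := minFac_prime (fermatNumber_ne_one j₀)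
  have hrF : r ∣ fermatNumber j₀ := minFac_dvd _
  have hr4 : r % 4 = 1 := mod_four_eq_one_of_prime_dvd_fermatNumber hj₀ hr hrF
  obtain ⟨j, hj⟩ := exists_testBit_of_ne_zero (hr.factorization_pos_of_dvd hN0 (hrF.trans hFN)).ne'
  have hq3 : q = 3 := by
    refine eq_three_of_fermatNumber_add_one_eq_two_mul hj₀ hq ?_
    rw [fermatNumber_eq_prime_pow_of_infsigma_eq hN0 hq hqodd hσN hA hj₀ hbit hFN hr hrF,
      factorization_eq_two_pow_of_infsigma_eq hq hqodd hσN hr hr4 hj]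
    exact pow_two_pow_add_one_eq_two_mul_of_infsigma_eq hq hqodd hσN hr hr4 hj
  subst hq3
  have hN2 : N = 2 * infsigma (2 ^ f) := by omega
  exact factorization_two_ne_one_of_infsigma_eq_two_pow_mul_three hN0 hσN hr hr4 (hrF.trans hFN)
    (hN2 ▸ factorization_two_two_mul_of_odd (odd_infsigma_two_pow f))
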